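/- arXiv:math/0211356 — 4 statements merged into one kernel-verified Lean document; each statement's English description precedes it below -/
import Mathlib

section
/- Let x be a nonzero traceless Hermitian n×n complex matrix. Then x has at least one strictly positive eigenvalue and at least one strictly negative eigenvalue, and consequently the map t ↦ tr(A · exp(tx)) tends to ∞ as t → ±∞ for any positive definite matrix A. -/
/-!
Diagonalise `x = U diag(λ) U*`. The eigenvalues sum to `tr x = 0` and do not all vanish, so both
signs occur. Moreover `re tr (A exp (t x)) = ∑ᵢ cᵢ e^{t λᵢ}` with `cᵢ = (U* A U)ᵢᵢ > 0`, and this sum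
of positive terms already tends to `∞` along any filter on which one exponent `t λᵢ` does.
-/

open Matrix Filter
open scoped ComplexOrder

theorem exists_pos_and_exists_neg_of_sum_eq_zero {ι M : Type*} [Fintype ι]
    [AddCommGroup M] [LinearOrder M] [IsOrderedAddMonoid M] {f : ι → M}
    (hsum : ∑ i, f i = 0) (hf : f ≠ 0) : (∃ i, 0 < f i) ∧ ∃ j, f j < 0 := by
  obtain ⟨k, hk⟩ := Function.ne_iff.mp hf
  obtain ⟨i, -, hi⟩ := Finset.exists_pos_of_sum_zero_of_exists_nonzero f hsum
    ⟨k, Finset.mem_univ _, hk⟩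
  obtain ⟨j, -, hj⟩ := Finset.exists_pos_of_sum_zero_of_exists_nonzero (-f)
    (by simp [hsum]) ⟨k, Finset.mem_univ _, by simpa using hk⟩
  exact ⟨⟨i, hi⟩, ⟨j, neg_pos.mp hj⟩⟩

theorem tendsto_sum_mul_exp_mul {ι : Type*} [Fintype ι] {l : Filter ℝ} {c μ : ι → ℝ}
    (hc : ∀ i, 0 < c i) {k : ι} (hk : Tendsto (fun t => t * μ k) l atTop) :
    Tendsto (fun t => ∑ i, c i * Real.exp (t * μ i)) l atTop :=
  tendsto_atTop_mono
    (fun t => Finset.single_le_sum (f := fun i => c i * Real.exp (t * μ i))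
      (fun i _ => (mul_pos (hc i) (Real.exp_pos _)).le) (Finset.mem_univ k))
    ((Real.tendsto_exp_atTop.comp hk).const_mul_atTop (hc k))

namespace Matrix

variable {n : Type*} [Fintype n] [DecidableEq n]

theorem trace_mul_mul_diagonal_mul {R : Type*} [CommSemiring R] (A U V : Matrix n n R)
    (d : n → R) : trace (A * (U * diagonal d * V)) = ∑ i, (V * A * U) i i * d i := by
  rw [← mul_assoc, ← mul_assoc, trace_mul_cycle, ← mul_assoc]
  simp [trace, mul_diagonal]

namespace IsHermitian

variable {𝕜 : Type*} [RCLike 𝕜] {x : Matrix n n 𝕜}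

theorem exp_smul (hx : x.IsHermitian) (t : ℝ) :
    NormedSpace.exp (t • x) = (hx.eigenvectorUnitary : Matrix n n 𝕜) *
      diagonal (fun i => ((Real.exp (t * hx.eigenvalues i) : ℝ) : 𝕜)) *
      star (hx.eigenvectorUnitary : Matrix n n 𝕜) := by
  have hinv : (hx.eigenvectorUnitary : Matrix n n 𝕜)⁻¹ =
      star (hx.eigenvectorUnitary : Matrix n n 𝕜) :=
    inv_eq_left_inv (UnitaryGroup.star_mul_self _)
  conv_lhs => rw [hx.spectral_theorem, Unitary.conjStarAlgAut_apply, ← smul_mul_assoc,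
    ← mul_smul_comm, ← hinv, exp_conj _ _ Unitary.isUnit_coe, ← diagonal_smul, exp_diagonal]
  congr
  funext i
  rw [Pi.coe_exp, Pi.smul_apply, Function.comp_apply, RCLike.real_smul_eq_coe_mul,
    ← RCLike.ofReal_mul, Real.exp_eq_exp_ℝ, ← RCLike.algebraMap_eq_ofReal,
    NormedSpace.algebraMap_exp_comm]

theorem re_trace_mul_exp_smul (hx : x.IsHermitian) (A : Matrix n n 𝕜) (t : ℝ) :
    RCLike.re (trace (A * NormedSpace.exp (t • x))) =
      ∑ i, RCLike.re ((star (hx.eigenvectorUnitary : Matrix n n 𝕜) * A *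
        (hx.eigenvectorUnitary : Matrix n n 𝕜)) i i) * Real.exp (t * hx.eigenvalues i) := by
  simp_rw [hx.exp_smul, trace_mul_mul_diagonal_mul, map_sum, RCLike.re_mul_ofReal]

end IsHermitian

end Matrix

/-- a nonzero traceless Hermitian matrix has a strictly positive and a
strictly negative eigenvalue, and consequently `t ↦ tr(A · exp(t x))` tends to `∞`
as `t → ±∞` for every positive definite `A`. -/
theorem stmt3 (n : ℕ) (x : Matrix (Fin n) (Fin n) ℂ)
    (hx : x.IsHermitian) (htr : x.trace = 0) (hne : x ≠ 0) :
    (∃ i, (0:ℝ) < hx.eigenvalues i) ∧ (∃ j, hx.eigenvalues j < (0:ℝ)) ∧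
    (∀ A : Matrix (Fin n) (Fin n) ℂ, A.PosDef →
      Filter.Tendsto (fun t : ℝ => ((A * NormedSpace.exp ((t : ℂ) • x)).trace).re)
        Filter.atTop Filter.atTop ∧
      Filter.Tendsto (fun t : ℝ => ((A * NormedSpace.exp ((t : ℂ) • x)).trace).re)
        Filter.atBot Filter.atTop) := by
  have hsum : ∑ i, hx.eigenvalues i = 0 := (RCLike.ofReal_eq_zero (K := ℂ)).mp <| by
    rw [RCLike.ofReal_sum, ← hx.trace_eq_sum_eigenvalues, htr]
  obtain ⟨⟨i, hi⟩, ⟨j, hj⟩⟩ :=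
    exists_pos_and_exists_neg_of_sum_eq_zero hsum (hx.eigenvalues_eq_zero_iff.not.mpr hne)
  refine ⟨⟨i, hi⟩, ⟨j, hj⟩, fun A hA => ?_⟩
  have hc (k : Fin n) : 0 < RCLike.re ((star (hx.eigenvectorUnitary : Matrix (Fin n) (Fin n) ℂ) *
      A * hx.eigenvectorUnitary) k k) :=
    (RCLike.pos_iff.mp ((IsUnit.posDef_star_left_conjugate_iff Unitary.isUnit_coe).mpr
      hA).diag_pos).1
  simp_rw [Complex.coe_smul, ← RCLike.re_to_complex, hx.re_trace_mul_exp_smul]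
  exact ⟨tendsto_sum_mul_exp_mul hc (tendsto_id.atTop_mul_const hi),
    tendsto_sum_mul_exp_mul hc (tendsto_id.atBot_mul_const_of_neg hj)⟩
end

section
/- Let y'_1 ≥ y'_2 ≥ ⋯ ≥ y'_n = 0 with Σ y'_i = 1, not all y'_i equal. Then the function g(t) = (1/n + t)^n / ∏_{i=1}^n (y'_i + t) is strictly decreasing on (0, ∞). -/
/-!
Write `g = exp ∘ L` with `L t = n log (m + t) - ∑ᵢ log (yᵢ + t)`, where `m` is the mean of the `yᵢ`.
Then `L' t = n / (m + t) - ∑ᵢ 1 / (yᵢ + t)`, which is negative because `m + t` is the arithmetic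
mean of the non-constant positive family `yᵢ + t`, so by strict Jensen for `x ↦ x⁻¹` its inverse is
strictly smaller than the mean of the inverses.
-/

open Real Set Finset

theorem inv_mean_lt_mean_inv {ι : Type*} (s : Finset ι) (p : ι → ℝ) (hp : ∀ i ∈ s, 0 < p i)
    (hne : ∃ i ∈ s, ∃ j ∈ s, p i ≠ p j) :
    ((∑ i ∈ s, p i) / #s)⁻¹ < (∑ i ∈ s, (p i)⁻¹) / #s := by
  have hcard : (0 : ℝ) < #s := by
    obtain ⟨i, hi, -⟩ := hne
    exact_mod_cast card_pos.mpr ⟨i, hi⟩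
  have hJensen := (strictConvexOn_zpow (m := -1) (by norm_num) (by norm_num)).map_sum_lt
    (w := fun _ => (#s : ℝ)⁻¹) (fun _ _ => inv_pos.mpr hcard)
    (by rw [sum_const, nsmul_eq_mul, mul_inv_cancel₀ hcard.ne']) hp hne
  simpa only [smul_eq_mul, ← mul_sum, zpow_neg_one, div_eq_inv_mul] using hJensen

section

variable {ι : Type*} [Fintype ι] (y : ι → ℝ)

theorem hasDerivAt_card_mul_log_add_sub_sum_log_add {c t : ℝ} (hc : 0 < c + t)
    (hy : ∀ i, 0 < y i + t) :
    HasDerivAt (fun t => Fintype.card ι * log (c + t) - ∑ i, log (y i + t))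
      (Fintype.card ι * (c + t)⁻¹ - ∑ i, (y i + t)⁻¹) t := by
  have hfirst := (((hasDerivAt_id t).const_add c).log hc.ne').const_mul (Fintype.card ι : ℝ)
  have hsum := HasDerivAt.fun_sum (u := univ) fun i _ =>
    ((hasDerivAt_id t).const_add (y i)).log (hy i).ne'
  simpa using hfirst.fun_sub hsum

theorem card_mul_inv_mean_add_lt_sum_inv_add (hne : ∃ i j, y i ≠ y j) {t : ℝ}
    (hy : ∀ i, 0 < y i + t) :
    Fintype.card ι * ((∑ i, y i) / Fintype.card ι + t)⁻¹ < ∑ i, (y i + t)⁻¹ := by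
  obtain ⟨i, j, hij⟩ := hne
  have hcard : (0 : ℝ) < Fintype.card ι := by exact_mod_cast Fintype.card_pos_iff.mpr ⟨i⟩
  have hmean : (∑ i, (y i + t)) / Fintype.card ι = (∑ i, y i) / Fintype.card ι + t := by
    rw [sum_add_distrib, sum_const, card_univ, nsmul_eq_mul]
    field_simp
  have hHM := inv_mean_lt_mean_inv univ (fun i => y i + t) (fun i _ => hy i)
    ⟨i, mem_univ i, j, mem_univ j, by simpa using hij⟩
  rw [card_univ, hmean, lt_div_iff₀ hcard] at hHM
  linarith

theorem strictAntiOn_mean_add_pow_div_prod_add (hy : ∀ i, 0 ≤ y i) (hne : ∃ i j, y i ≠ y j) :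
    StrictAntiOn
      (fun t => ((∑ i, y i) / Fintype.card ι + t) ^ Fintype.card ι / ∏ i, (y i + t))
      (Ioi 0) := by
  set m := (∑ i, y i) / Fintype.card ι
  have hm : 0 ≤ m := div_nonneg (sum_nonneg fun i _ => hy i) (Nat.cast_nonneg _)
  let L : ℝ → ℝ := fun t => Fintype.card ι * log (m + t) - ∑ i, log (y i + t)
  have hL : ∀ t ∈ Ioi (0 : ℝ), HasDerivAt L
      (Fintype.card ι * (m + t)⁻¹ - ∑ i, (y i + t)⁻¹) t := fun t ht =>
    hasDerivAt_card_mul_log_add_sub_sum_log_add y (by linarith [mem_Ioi.mp ht])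
      fun i => by linarith [hy i, mem_Ioi.mp ht]
  have hL_anti : StrictAntiOn L (Ioi 0) := by
    refine strictAntiOn_of_deriv_neg (convex_Ioi 0)
      (fun t ht => (hL t ht).continuousAt.continuousWithinAt) fun t ht => ?_
    rw [interior_Ioi] at ht
    rw [(hL t ht).deriv, sub_neg]
    exact card_mul_inv_mean_add_lt_sum_inv_add y hne fun i => by linarith [hy i, mem_Ioi.mp ht]
  have hexp : ∀ t ∈ Ioi (0 : ℝ),
      (m + t) ^ Fintype.card ι / ∏ i, (y i + t) = exp (L t) := by
    intro t ht
    have ht : 0 < t := ht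
    rw [exp_sub, exp_nat_mul, exp_log (by linarith), exp_sum]
    congr 1
    exact prod_congr rfl fun i _ => (exp_log (by linarith [hy i])).symm
  intro a ha b hb hab
  simp only
  rw [hexp a ha, hexp b hb]
  exact exp_lt_exp.mpr (hL_anti ha hb hab)

end

/-- for `y'_1 ≥ ⋯ ≥ y'_n = 0` with `∑ y'_i = 1`, not all equal, the
function `g(t) = (1/n + t)^n / ∏ i (y'_i + t)` is strictly decreasing on `(0, ∞)`. -/
theorem stmt8 (n : ℕ) (hn : 0 < n) (y' : Fin n → ℝ) (hmono : Antitone y')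
    (hlast : y' ⟨n - 1, by omega⟩ = 0) (hsum : ∑ i, y' i = 1)
    (hne : ∃ i j, y' i ≠ y' j) :
    StrictAntiOn (fun t : ℝ => ((1 / n : ℝ) + t) ^ n / ∏ i, (y' i + t))
      (Set.Ioi (0 : ℝ)) := by
  have hy : ∀ i, 0 ≤ y' i := fun i =>
    hlast ▸ hmono (Fin.le_def.mpr (by simp only; omega))
  simpa [hsum] using strictAntiOn_mean_add_pow_div_prod_add y' hy hne
end

section
/- The map φ: Σ → A_q defined by φ(y')_i = q^{-1} n (y'_i + α(y'))/(1 + n α(y')), where α(y') is the unique real making ∏_i φ(y')_i = 1, is a homeomorphism between the simplex Σ = {y'_1 ≥ ⋯ ≥ y'_n = 0, Σ y'_i = 1} and A_q = {y''_1 ≥ ⋯ ≥ y''_n ≥ 0, ∏ y''_i = 1, Σ y''_i = n/q}, with inverse y'' ↦ ((y''_i − y''_n)/(Σ_j y''_j − n·y''_n))_i. -/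
/-!
The inverse map `ψ = normalizeGaps` is a continuous map from the compact set `A_q` to the
Hausdorff space `Σ`, so it suffices to show that it is bijective. Every `y ∈ A_q` is recovered
from `w = ψ y` as `shiftScale q w α` for `α = y_n / (∑ y - n y_n)`, and for fixed `w` these
points lie on a segment ending at the constant vector `q⁻¹`. Since `q⁻¹ > 1`, weighted AM-GM
shows that the product of the coordinates strictly increases along that segment, so at most one
`α` gives product `1` (injectivity); the intermediate value theorem provides one (surjectivity).
-/

open Finset

theorem one_lt_prod_mul_add_mul_of_prod_eq_one {ι : Type*} [Fintype ι] [Nonempty ι]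
    {y : ι → ℝ} {c t : ℝ} (hy : ∀ i, 0 ≤ y i) (hprod : ∏ i, y i = 1) (hc : 1 < c)
    (ht0 : 0 ≤ t) (ht1 : t < 1) :
    1 < ∏ i, (t * y i + (1 - t) * c) := by
  have hc0 : 0 < c := by linarith
  calc 1 < (c ^ (1 - t)) ^ Fintype.card ι :=
        one_lt_pow₀ (Real.one_lt_rpow hc (by linarith)) Fintype.card_ne_zero
    _ = ∏ i, y i ^ t * c ^ (1 - t) := by
        rw [prod_mul_distrib, Real.finsetProd_rpow _ _ fun i _ => hy i, hprod, Real.one_rpow,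
          one_mul, prod_const, card_univ]
    _ ≤ ∏ i, (t * y i + (1 - t) * c) :=
        prod_le_prod (fun i _ => by have := hy i; positivity) fun i _ =>
          Real.geom_mean_le_arith_mean2_weighted ht0 (by linarith) (hy i) hc0.le (by ring)

noncomputable section

variable {n : ℕ}

def antitoneSimplex (L : Fin n) : Set (Fin n → ℝ) :=
  {w | Antitone w ∧ w L = 0 ∧ ∑ i, w i = 1}

def antitoneLevelSet (n : ℕ) (q : ℝ) : Set (Fin n → ℝ) :=
  {y | Antitone y ∧ (∀ i, 0 ≤ y i) ∧ ∏ i, y i = 1 ∧ ∑ i, y i = n / q}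

def gapSum (L : Fin n) (y : Fin n → ℝ) : ℝ := ∑ j, y j - n * y L

def normalizeGaps (L : Fin n) (y : Fin n → ℝ) : Fin n → ℝ := fun i => (y i - y L) / gapSum L y

/-- The paper's `φ(w)` with the parameter `α` left free. -/
def shiftScale (q : ℝ) (w : Fin n → ℝ) (α : ℝ) : Fin n → ℝ :=
  fun i => q⁻¹ * n * (w i + α) / (1 + n * α)

variable {L : Fin n} {q α β : ℝ} {w y : Fin n → ℝ}

theorem antitoneSimplex.nonneg (hL : IsTop L) (hw : w ∈ antitoneSimplex L) (i : Fin n) :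
    0 ≤ w i :=
  hw.2.1 ▸ hw.1 (hL i)

theorem shiftScale_eq_mul (w : Fin n → ℝ) (α : ℝ) (i : Fin n) :
    shiftScale q w α i = q⁻¹ * n / (1 + n * α) * (w i + α) :=
  mul_div_right_comm _ _ _

theorem shiftScale_nonneg (hq : 0 ≤ q) (hw : ∀ i, 0 ≤ w i) (hα : 0 ≤ α) (i : Fin n) :
    0 ≤ shiftScale q w α i := by
  have := hw i
  unfold shiftScale
  positivity

theorem shiftScale_eq_convexComb (hα : 0 ≤ α) (hβ : 0 ≤ β) (i : Fin n) :
    shiftScale q w β i = (1 + n * α) / (1 + n * β) * shiftScale q w α i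
      + (1 - (1 + n * α) / (1 + n * β)) * q⁻¹ := by
  have : 1 + n * α ≠ 0 := by positivity
  have : 1 + n * β ≠ 0 := by positivity
  simp only [shiftScale]
  field_simp
  ring

theorem one_lt_prod_shiftScale [NeZero n] (hq0 : 0 < q) (hq1 : q < 1) (hw : ∀ i, 0 ≤ w i)
    (hα : 0 ≤ α) (hαβ : α < β) (hprod : ∏ i, shiftScale q w α i = 1) :
    1 < ∏ i, shiftScale q w β i := by
  have hβ0 : 0 ≤ β := hα.trans hαβ.le
  simp_rw [shiftScale_eq_convexComb hα hβ0]
  have hβ : 0 < 1 + n * β := by positivity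
  exact one_lt_prod_mul_add_mul_of_prod_eq_one (shiftScale_nonneg hq0.le hw hα) hprod
    ((one_lt_inv₀ hq0).2 hq1) (by positivity)
    ((div_lt_one hβ).2 (by gcongr; exact_mod_cast (NeZero.pos n)))

theorem eq_of_prod_shiftScale_eq_one [NeZero n] (hq0 : 0 < q) (hq1 : q < 1)
    (hw : ∀ i, 0 ≤ w i) (hα : 0 ≤ α) (hβ : 0 ≤ β) (hα1 : ∏ i, shiftScale q w α i = 1)
    (hβ1 : ∏ i, shiftScale q w β i = 1) : α = β := by
  by_contra hne
  rcases lt_or_gt_of_ne hne with h | h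
  · exact (one_lt_prod_shiftScale hq0 hq1 hw hα h hα1).ne' hβ1
  · exact (one_lt_prod_shiftScale hq0 hq1 hw hβ h hβ1).ne' hα1

/-- At `α = q / (n (1 - q))` every coordinate is at least `1`, while at `α = 0` the coordinate
`L` vanishes; the intermediate value theorem gives a root in between. -/
theorem exists_prod_shiftScale_eq_one (hq0 : 0 < q) (hq1 : q < 1) (hw : ∀ i, 0 ≤ w i)
    (hwL : w L = 0) : ∃ α, 0 ≤ α ∧ ∏ i, shiftScale q w α i = 1 := by
  have hn : (0 : ℝ) < n := by exact_mod_cast L.pos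
  have hq1' : 0 < 1 - q := sub_pos.2 hq1
  set β := q / (n * (1 - q))
  have hβ : 0 ≤ β := by positivity
  have h0 : ∏ i, shiftScale q w 0 i = 0 := prod_eq_zero (mem_univ L) (by simp [shiftScale, hwL])
  have h1 : 1 ≤ ∏ i, shiftScale q w β i := by
    have hβ1 : q⁻¹ * n * β = 1 + n * β := by
      simp only [β]
      field_simp
      ring
    calc (1 : ℝ) = ∏ _i : Fin n, 1 := prod_const_one.symm
      _ ≤ ∏ i, shiftScale q w β i := prod_le_prod (fun _ _ => zero_le_one) fun i _ => by
          have := hw i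
          rw [shiftScale, le_div_iff₀ (by positivity)]
          nlinarith [mul_nonneg (mul_nonneg (inv_nonneg.2 hq0.le) hn.le) this]
  have hcont : ContinuousOn (fun α => ∏ i, shiftScale q w α i) (Set.Icc 0 β) :=
    continuousOn_finsetProd _ fun i _ =>
      ContinuousOn.div (by fun_prop) (by fun_prop) fun α hα => by have := hα.1; positivity
  obtain ⟨α, hα, hα1⟩ := intermediate_value_Icc hβ hcont ⟨by rw [h0]; exact zero_le_one, h1⟩
  exact ⟨α, hα.1, hα1⟩

theorem shiftScale_mem_antitoneLevelSet (hq0 : 0 < q) (hL : IsTop L)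
    (hw : w ∈ antitoneSimplex L) (hα : 0 ≤ α) (hprod : ∏ i, shiftScale q w α i = 1) :
    shiftScale q w α ∈ antitoneLevelSet n q := by
  have hn : (0 : ℝ) < n := by exact_mod_cast L.pos
  refine ⟨fun i j hij => ?_, shiftScale_nonneg hq0.le (antitoneSimplex.nonneg hL hw) hα, hprod, ?_⟩
  · rw [shiftScale_eq_mul, shiftScale_eq_mul]
    gcongr
    exact hw.1 hij
  · simp_rw [shiftScale_eq_mul]
    rw [← mul_sum, sum_add_distrib, hw.2.2, sum_const, card_univ, Fintype.card_fin, nsmul_eq_mul]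
    field_simp

theorem normalizeGaps_mul_add (L : Fin n) (w : Fin n → ℝ) {c : ℝ} (hc : c ≠ 0) (k : ℝ) :
    normalizeGaps L (fun i => c * w i + k) = normalizeGaps L w := by
  funext i
  simp only [normalizeGaps, gapSum, sum_add_distrib, ← mul_sum, sum_const, card_univ,
    Fintype.card_fin, nsmul_eq_mul]
  rw [show c * w i + k - (c * w L + k) = c * (w i - w L) by ring,
    show c * ∑ j, w j + n * k - n * (c * w L + k) = c * (∑ j, w j - n * w L) by ring,
    mul_div_mul_left _ _ hc]

theorem normalizeGaps_eq_self (h0 : w L = 0) (h1 : ∑ i, w i = 1) : normalizeGaps L w = w := by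
  funext i
  simp [normalizeGaps, gapSum, h0, h1]

theorem normalizeGaps_shiftScale (hq : q ≠ 0) (hw : w ∈ antitoneSimplex L) (hα : 0 ≤ α) :
    normalizeGaps L (shiftScale q w α) = w := by
  have hn : (n : ℝ) ≠ 0 := by exact_mod_cast L.pos.ne'
  have hc : q⁻¹ * n / (1 + n * α) ≠ 0 := by
    have : 1 + n * α ≠ 0 := by positivity
    simp_all
  rw [funext (shiftScale_eq_mul w α), funext fun i => mul_add _ (w i) α,
    normalizeGaps_mul_add L w hc, normalizeGaps_eq_self hw.2.1 hw.2.2]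

theorem gapSum_pos (hq0 : 0 < q) (hq1 : q < 1) (hL : IsTop L) (hy : y ∈ antitoneLevelSet n q) :
    0 < gapSum L y := by
  obtain ⟨hmono, hpos, hprod, hsum⟩ := hy
  have hyL : y L ≤ 1 := by
    refine (pow_le_one_iff_of_nonneg (hpos L) L.pos.ne').1 ?_
    calc y L ^ n = ∏ _i : Fin n, y L := by simp
      _ ≤ ∏ i, y i := prod_le_prod (fun _ _ => hpos L) fun i _ => hmono (hL i)
      _ = 1 := hprod
  have hn : (0 : ℝ) < n := by exact_mod_cast L.pos
  rw [gapSum, hsum, div_eq_mul_inv, ← mul_sub]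
  exact mul_pos hn (by linarith [(one_lt_inv₀ hq0).2 hq1])

theorem sum_normalizeGaps (hD : gapSum L y ≠ 0) : ∑ i, normalizeGaps L y i = 1 := by
  simp only [normalizeGaps]
  rw [← sum_div, sum_sub_distrib, sum_const, card_univ, Fintype.card_fin, nsmul_eq_mul]
  exact div_self hD

theorem normalizeGaps_mem_antitoneSimplex (hq0 : 0 < q) (hq1 : q < 1) (hL : IsTop L)
    (hy : y ∈ antitoneLevelSet n q) : normalizeGaps L y ∈ antitoneSimplex L := by
  have hD := gapSum_pos hq0 hq1 hL hy
  exact ⟨fun i j hij => div_le_div_of_nonneg_right (sub_le_sub_right (hy.1 hij) _) hD.le,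
    by simp [normalizeGaps], sum_normalizeGaps hD.ne'⟩

theorem shiftScale_normalizeGaps (hq : q ≠ 0) (hsum : ∑ i, y i = n / q) (hD : 0 < gapSum L y) :
    shiftScale q (normalizeGaps L y) (y L / gapSum L y) = y := by
  have hn : (n : ℝ) ≠ 0 := by exact_mod_cast L.pos.ne'
  have hDL : gapSum L y + n * y L = n / q := by rw [gapSum, hsum]; ring
  funext i
  simp only [shiftScale, normalizeGaps]
  rw [← add_div, sub_add_cancel]
  field_simp
  rw [hDL]
  field_simp

theorem isCompact_antitoneLevelSet (q : ℝ) : IsCompact (antitoneLevelSet n q) := by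
  have hclosed : IsClosed (antitoneLevelSet n q) := by
    simp only [antitoneLevelSet, Set.ofPred_and, Set.ofPred_forall]
    exact isClosed_antitone.inter <| (isClosed_iInter fun i => isClosed_le continuous_const
      (continuous_apply i)).inter <|
      (isClosed_eq (continuous_finsetProd _ fun i _ => continuous_apply i) continuous_const).inter
        (isClosed_eq (continuous_finsetSum _ fun i _ => continuous_apply i) continuous_const)
  refine (isCompact_Icc (a := fun _ => 0) (b := fun _ => n / q)).of_isClosed_subset hclosed ?_
  rintro y ⟨-, hpos, -, hsum⟩
  exact ⟨hpos, fun i => hsum ▸ single_le_sum (fun j _ => hpos j) (mem_univ i)⟩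

theorem continuous_normalizeGaps (hq0 : 0 < q) (hq1 : q < 1) (hL : IsTop L) :
    Continuous fun y : antitoneLevelSet n q => normalizeGaps L y := by
  refine continuous_pi fun i => Continuous.div ?_ ?_ fun y => (gapSum_pos hq0 hq1 hL y.2).ne'
  · exact (by fun_prop : Continuous fun y : Fin n → ℝ => y i - y L).comp continuous_subtype_val
  · exact (by unfold gapSum; fun_prop : Continuous (gapSum L)).comp continuous_subtype_val

variable (q) in
/-- The paper's `α(w)`. -/
def simplexParam (hq0 : 0 < q) (hq1 : q < 1) (hL : IsTop L) (w : antitoneSimplex L) : ℝ :=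
  (exists_prod_shiftScale_eq_one hq0 hq1 (antitoneSimplex.nonneg hL w.2) w.2.2.1).choose

theorem simplexParam_nonneg (hq0 : 0 < q) (hq1 : q < 1) (hL : IsTop L) (w : antitoneSimplex L) :
    0 ≤ simplexParam q hq0 hq1 hL w :=
  (exists_prod_shiftScale_eq_one hq0 hq1 (antitoneSimplex.nonneg hL w.2) w.2.2.1).choose_spec.1

theorem prod_shiftScale_simplexParam (hq0 : 0 < q) (hq1 : q < 1) (hL : IsTop L)
    (w : antitoneSimplex L) :
    ∏ i, shiftScale q (w : Fin n → ℝ) (simplexParam q hq0 hq1 hL w) i = 1 :=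
  (exists_prod_shiftScale_eq_one hq0 hq1 (antitoneSimplex.nonneg hL w.2) w.2.2.1).choose_spec.2

variable (q) in
def levelSetEquivSimplex (hq0 : 0 < q) (hq1 : q < 1) (hL : IsTop L) :
    antitoneLevelSet n q ≃ antitoneSimplex L where
  toFun y := ⟨normalizeGaps L y, normalizeGaps_mem_antitoneSimplex hq0 hq1 hL y.2⟩
  invFun w := ⟨shiftScale q (w : Fin n → ℝ) (simplexParam q hq0 hq1 hL w),
    shiftScale_mem_antitoneLevelSet hq0 hL w.2 (simplexParam_nonneg hq0 hq1 hL w)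
      (prod_shiftScale_simplexParam hq0 hq1 hL w)⟩
  left_inv y := by
    have : NeZero n := ⟨L.pos.ne'⟩
    let w : antitoneSimplex L :=
      ⟨normalizeGaps L y, normalizeGaps_mem_antitoneSimplex hq0 hq1 hL y.2⟩
    have hD := gapSum_pos hq0 hq1 hL y.2
    have hy := shiftScale_normalizeGaps hq0.ne' y.2.2.2.2 hD
    have hα : simplexParam q hq0 hq1 hL w = (y : Fin n → ℝ) L / gapSum L y :=
      eq_of_prod_shiftScale_eq_one hq0 hq1 (antitoneSimplex.nonneg hL w.2)
        (simplexParam_nonneg hq0 hq1 hL w) (div_nonneg (y.2.2.1 L) hD.le)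
        (prod_shiftScale_simplexParam hq0 hq1 hL w) (by rw [hy]; exact y.2.2.2.1)
    refine Subtype.ext ?_
    change shiftScale q (normalizeGaps L y) (simplexParam q hq0 hq1 hL w) = y
    rw [hα, hy]
  right_inv w :=
    Subtype.ext (normalizeGaps_shiftScale hq0.ne' w.2 (simplexParam_nonneg hq0 hq1 hL w))

variable (q) in
def levelSetHomeomorphSimplex (hq0 : 0 < q) (hq1 : q < 1) (hL : IsTop L) :
    antitoneLevelSet n q ≃ₜ antitoneSimplex L :=
  have := isCompact_iff_compactSpace.1 (isCompact_antitoneLevelSet (n := n) q)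
  Continuous.homeoOfEquivCompactToT2 (f := levelSetEquivSimplex q hq0 hq1 hL)
    ((continuous_normalizeGaps hq0 hq1 hL).subtype_mk _)

end

/-- the map `φ(y')_i = q⁻¹ n (y'_i + α(y'))/(1 + n α(y'))`, where
`α(y') ≥ 0` is the unique real making `∏ i φ(y')_i = 1`, is a homeomorphism from the
simplex `Σ = {y'_1 ≥ ⋯ ≥ y'_n = 0, ∑ y'_i = 1}` onto
`A_q = {y''_1 ≥ ⋯ ≥ y''_n ≥ 0, ∏ y''_i = 1, ∑ y''_i = n/q}`, with inverse
`y'' ↦ ((y''_i − y''_n)/(∑_j y''_j − n y''_n))_i`. -/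
theorem stmt11 (n : ℕ) (hn : 2 ≤ n) (q : ℝ) (hq0 : 0 < q) (hq1 : q < 1) :
    ∃ φ : ({y' : Fin n → ℝ | Antitone y' ∧ y' ⟨n - 1, by omega⟩ = 0 ∧ ∑ i, y' i = 1}) ≃ₜ
          ({y'' : Fin n → ℝ | Antitone y'' ∧ (∀ i, 0 ≤ y'' i) ∧
              ∏ i, y'' i = 1 ∧ ∑ i, y'' i = n / q}),
      (∀ y', ∃ α : ℝ, 0 ≤ α ∧
        ∀ i, (φ y' : Fin n → ℝ) i = q⁻¹ * n * ((y' : Fin n → ℝ) i + α) / (1 + n * α)) ∧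
      (∀ y'', (φ.symm y'' : Fin n → ℝ) = fun i =>
        ((y'' : Fin n → ℝ) i - (y'' : Fin n → ℝ) ⟨n - 1, by omega⟩) /
          ((∑ j, (y'' : Fin n → ℝ) j) - n * (y'' : Fin n → ℝ) ⟨n - 1, by omega⟩)) := by
  have hL : IsTop (⟨n - 1, by omega⟩ : Fin n) := fun i => Fin.mk_le_mk.2 (by omega)
  exact ⟨(levelSetHomeomorphSimplex q hq0 hq1 hL).symm,
    fun w => ⟨_, simplexParam_nonneg hq0 hq1 hL w, fun i => rfl⟩, fun y => rfl⟩
end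

section
/- (Alternant identity) For t_1,…,t_n distinct and a strictly decreasing sequence of naturals λ_1 + n − 1 > λ_2 + n − 2 > ⋯ > λ_n, det[t_i^{λ_j + n − j}]_{i,j} = V(t_1,…,t_n) · s_λ(t_1,…,t_n), where V is the Vandermonde ∏_{i<j}(t_j − t_i) (with appropriate sign convention) and s_λ is the Schur polynomial. -/
/-!
Substituting `X i` for `X j` makes two rows of the alternant equal, so every `X j - X i` divides
it. These factors are pairwise non-associated primes, hence their product, the Vandermonde
determinant, divides the alternant as well. Renaming the variables by a permutation multiplies
both the alternant and the Vandermonde determinant by its sign, so the quotient is symmetric.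
-/

open MvPolynomial Finset

theorem Finset.prod_dvd_of_prime_of_pairwise_not_dvd {ι M₀ : Type*} [CommMonoidWithZero M₀]
    [IsCancelMulZero M₀] [DecidableEq ι] {s : Finset ι} {p : ι → M₀} {a : M₀}
    (hp : ∀ i ∈ s, Prime (p i)) (hnd : (s : Set ι).Pairwise fun i j => ¬ p i ∣ p j)
    (hdvd : ∀ i ∈ s, p i ∣ a) : ∏ i ∈ s, p i ∣ a := by
  induction s using Finset.induction_on generalizing a with
  | empty => simp
  | insert i s hi ih =>
    obtain ⟨b, rfl⟩ := hdvd i (mem_insert_self i s)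
    rw [prod_insert hi]
    refine mul_dvd_mul_left _ (ih (fun k hk => hp k (mem_insert_of_mem hk))
      (hnd.mono (by simp)) fun k hk => ?_)
    have hki : k ≠ i := fun h => hi (h ▸ hk)
    exact ((hp k (mem_insert_of_mem hk)).dvd_or_dvd (hdvd k (mem_insert_of_mem hk))).resolve_left
      (hnd (by simp [hk]) (by simp) hki)

theorem exists_mem_pair_not_mem_pair {σ : Type*} [LinearOrder σ] {i j k l : σ} (hij : i < j)
    (hkl : k < l) (hne : (i, j) ≠ (k, l)) : ∃ m, (m = i ∨ m = j) ∧ m ≠ k ∧ m ≠ l := by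
  by_contra! h
  have hj := h j (.inr rfl)
  rcases eq_or_ne i k with rfl | hik
  · exact hne (Prod.ext rfl (hj hij.ne'))
  · obtain rfl := h i (.inl rfl) hik
    exact hij.ne' (hj (hkl.trans hij).ne')

namespace MvPolynomial

variable {σ R : Type*} [CommRing R]

def IsAlternating [Fintype σ] [DecidableEq σ] (f : MvPolynomial σ R) : Prop :=
  ∀ e : Equiv.Perm σ, rename e f = Equiv.Perm.sign e • f

theorem IsAlternating.isSymmetric_of_mul_eq [Fintype σ] [DecidableEq σ] [IsDomain R]
    {V A s : MvPolynomial σ R} (hV : V.IsAlternating) (hA : A.IsAlternating) (hV0 : V ≠ 0)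
    (h : V * s = A) : s.IsSymmetric := by
  intro e
  have hV0' : Equiv.Perm.sign e • V ≠ 0 := by
    rwa [Ne, smul_eq_zero_iff_eq]
  refine mul_left_cancel₀ hV0' ?_
  calc Equiv.Perm.sign e • V * rename e s = rename e (V * s) := by rw [map_mul, hV]
    _ = Equiv.Perm.sign e • V * s := by rw [h, hA, ← h, smul_mul_assoc]

theorem X_sub_X_dvd_sub_rename_update [DecidableEq σ] (i j : σ) (f : MvPolynomial σ R) :
    X j - X i ∣ f - rename (Function.update id j i) f := by
  induction f using MvPolynomial.induction_on with
  | C a => simp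
  | add p q hp hq => simpa only [map_add, add_sub_add_comm] using dvd_add hp hq
  | mul_X p k hp =>
    have hk : X j - X i ∣ (X k - X (Function.update id j i k) : MvPolynomial σ R) := by
      rcases eq_or_ne k j with rfl | hk
      · simp
      · simp [Function.update_of_ne hk]
    have := dvd_add (hp.mul_right (X k)) (hk.mul_left (rename (Function.update id j i) p))
    convert this using 1
    rw [map_mul, rename_X]
    ring

theorem prime_X_sub_X [IsDomain R] [DecidableEq σ] {i j : σ} (h : i ≠ j) :
    Prime (X j - X i : MvPolynomial σ R) := by
  let T := (renameEquiv R (Equiv.optionSubtypeNe j).symm).trans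
    (optionEquivLeft R {k : σ // k ≠ j})
  have hT : T (X j - X i) = Polynomial.X - Polynomial.C (X ⟨i, h⟩) := by
    simp [T, Equiv.optionSubtypeNe_symm_of_ne h, optionEquivLeft_X_some,
      optionEquivLeft_X_none]
  rw [← MulEquiv.prime_iff T, hT]
  exact Polynomial.prime_X_sub_C _

theorem X_sub_X_not_dvd [Nontrivial R] [DecidableEq σ] {i j k l m : σ} (hij : i ≠ j)
    (hm : m = i ∨ m = j) (hmk : m ≠ k) (hml : m ≠ l) :
    ¬ X l - X k ∣ (X j - X i : MvPolynomial σ R) := by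
  rintro ⟨f, hf⟩
  -- evaluating at the indicator of `m` kills `X l - X k` but not `X j - X i`
  have := congrArg (eval (Pi.single m 1)) hf
  rcases hm with rfl | rfl <;>
    simp [hmk.symm, hml.symm, hij, hij.symm] at this

theorem prod_X_sub_X_dvd [IsDomain R] [Fintype σ] [LinearOrder σ] {f : MvPolynomial σ R}
    (h : ∀ i j, i ≠ j → X j - X i ∣ f) :
    ∏ i, ∏ j ∈ univ.filter (fun j => i < j), (X j - X i) ∣ f := by
  rw [← prod_finset_product (f := fun p => X p.2 - X p.1)
    (univ.filter fun p : σ × σ => p.1 < p.2) _ _ (by simp)]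
  refine prod_dvd_of_prime_of_pairwise_not_dvd (fun p hp => prime_X_sub_X (mem_filter.mp hp).2.ne)
    ?_ fun p hp => h _ _ (mem_filter.mp hp).2.ne
  rintro ⟨k, l⟩ hkl ⟨i, j⟩ hij hne
  simp only [coe_filter, mem_univ, true_and, Set.mem_ofPred_eq] at hkl hij
  obtain ⟨m, hm, hmk, hml⟩ := exists_mem_pair_not_mem_pair hij hkl hne.symm
  exact X_sub_X_not_dvd hij.ne hm hmk hml

theorem rename_det_X_pow [Fintype σ] [DecidableEq σ] (g : σ → σ) (e : σ → ℕ) :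
    rename g (Matrix.of fun i k => (X i : MvPolynomial σ R) ^ e k).det =
      (Matrix.of fun i k => (X (g i) : MvPolynomial σ R) ^ e k).det := by
  rw [AlgHom.map_det]
  congr 1
  ext i k
  simp

theorem isAlternating_det_X_pow [Fintype σ] [DecidableEq σ] (e : σ → ℕ) :
    (Matrix.of fun i k => (X i : MvPolynomial σ R) ^ e k).det.IsAlternating := fun g => by
  rw [rename_det_X_pow, Units.smul_def, zsmul_eq_mul]
  exact Matrix.det_permute g (Matrix.of fun i k => (X i : MvPolynomial σ R) ^ e k)

theorem X_sub_X_dvd_det_X_pow [Fintype σ] [DecidableEq σ] (e : σ → ℕ) {i j : σ}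
    (hij : i ≠ j) :
    (X j - X i : MvPolynomial σ R) ∣
      (Matrix.of fun i k => (X i : MvPolynomial σ R) ^ e k).det := by
  have hcollapse : rename (Function.update id j i)
      (Matrix.of fun i k => (X i : MvPolynomial σ R) ^ e k).det = 0 := by
    rw [rename_det_X_pow]
    exact Matrix.det_zero_of_row_eq hij (by ext k; simp [Function.update_of_ne hij])
  simpa [hcollapse] using X_sub_X_dvd_sub_rename_update i j
    (Matrix.of fun i k => (X i : MvPolynomial σ R) ^ e k).det

theorem prod_X_sub_X_eq_det_X_pow {n : ℕ} :
    ∏ i : Fin n, ∏ j ∈ univ.filter (fun j => i < j), (X j - X i : MvPolynomial (Fin n) R) =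
      (Matrix.of fun i k : Fin n => (X i : MvPolynomial (Fin n) R) ^ (k : ℕ)).det := by
  simp [← Matrix.vandermonde.eq_def, Matrix.det_vandermonde, filter_lt_eq_Ioi]

end MvPolynomial

theorem stmt13_general (n : ℕ) (lam : Fin n → ℕ) :
    ∃ s : MvPolynomial (Fin n) ℝ,
      s.IsSymmetric ∧
      (∏ i : Fin n, ∏ j ∈ univ.filter (fun j => i < j), (X j - X i)) * s =
        Matrix.det (Matrix.of fun i j : Fin n =>
          (X i : MvPolynomial (Fin n) ℝ) ^ (lam j + (n - 1 - (j : ℕ)))) ∧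
      ∀ t : Fin n → ℝ, Function.Injective t →
        Matrix.det (Matrix.of fun i j : Fin n => t i ^ (lam j + (n - 1 - (j : ℕ)))) =
          (∏ i : Fin n, ∏ j ∈ univ.filter (fun j => i < j), (t j - t i)) * eval t s := by
  obtain ⟨s, hs⟩ := prod_X_sub_X_dvd (R := ℝ) fun i j hij => X_sub_X_dvd_det_X_pow
    (fun j : Fin n => lam j + (n - 1 - (j : ℕ))) hij
  have hV0 : ∏ i : Fin n, ∏ j ∈ univ.filter (fun j => i < j),
      (X j - X i : MvPolynomial (Fin n) ℝ) ≠ 0 :=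
    prod_ne_zero_iff.mpr fun i _ => prod_ne_zero_iff.mpr fun j hj =>
      (prime_X_sub_X (mem_filter.mp hj).2.ne).ne_zero
  have hV : (∏ i : Fin n, ∏ j ∈ univ.filter (fun j => i < j),
      (X j - X i : MvPolynomial (Fin n) ℝ)).IsAlternating := by
    rw [prod_X_sub_X_eq_det_X_pow]
    exact isAlternating_det_X_pow _
  refine ⟨s, hV.isSymmetric_of_mul_eq (isAlternating_det_X_pow _) hV0 hs.symm, hs.symm,
    fun t _ => ?_⟩
  simpa [RingHom.map_det, RingHom.mapMatrix_apply, Matrix.map, map_prod] using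
    congrArg (eval t) hs

/-- alternant identity: for a partition `λ_1 ≥ ⋯ ≥ λ_n ≥ 0`, the
alternant `det[X_i^{λ_j + n − j}]` is divisible by the Vandermonde
`V = ∏_{i<j} (X_j − X_i)` in the polynomial ring, the quotient `s_λ` (the Schur
polynomial) being a symmetric polynomial; evaluating at distinct reals `t_1, …, t_n`
gives `det[t_i^{λ_j+n−j}] = V(t) · s_λ(t)`. -/
theorem stmt13 (n : ℕ) (lam : Fin n → ℕ) (hlam : Antitone lam) :
    ∃ s : MvPolynomial (Fin n) ℝ,
      s.IsSymmetric ∧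
      (∏ i : Fin n, ∏ j ∈ univ.filter (fun j => i < j), (X j - X i)) * s =
        Matrix.det (Matrix.of fun i j : Fin n =>
          (X i : MvPolynomial (Fin n) ℝ) ^ (lam j + (n - 1 - (j : ℕ)))) ∧
      ∀ t : Fin n → ℝ, Function.Injective t →
        Matrix.det (Matrix.of fun i j : Fin n => t i ^ (lam j + (n - 1 - (j : ℕ)))) =
          (∏ i : Fin n, ∏ j ∈ univ.filter (fun j => i < j), (t j - t i)) * eval t s :=
  stmt13_general n lam
end
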